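/- In the setting of the previous block-diagonal Hamiltonian H_N = Σ_{j∈ℤ/N} P_{j,j+1}, we have dim ker H_N = Σ_{(α^1,...,α^N) ∈ C_N} Π_{j=1}^N dim ker Q_{α_r^j, α_l^{j+1}}, where C_N is the set of ordered closed walks of length N in the directed graph G on vertex set V having an edge α → β whenever ker Q_{α_r, β_l} ≠ 0. -/

import Mathlib

open Matrix

variable {V : Type*} [DecidableEq V]

/-- transport along an equality of vertices, left dimensions. -/
def castL (dl : V → ℕ) {α β : V} (h : α = β) (i : Fin (dl β)) : Fin (dl α) :=
  cast (by rw [h]) i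

/-- transport along an equality of vertices, right dimensions. -/
def castR (dr : V → ℕ) {α β : V} (h : α = β) (i : Fin (dr β)) : Fin (dr α) :=
  cast (by rw [h]) i

/-- the single-site index set, realizing `ℂ^d ≅ ⊕_{α ∈ V} H_{α_l} ⊗ H_{α_r}`
where `dim H_{α_l} = dl α` and `dim H_{α_r} = dr α`. -/
def Site (V : Type*) (dl dr : V → ℕ) : Type _ := Σ α : V, Fin (dl α) × Fin (dr α)

variable [Fintype V]

instance (dl dr : V → ℕ) : Fintype (Site V dl dr) := by unfold Site; infer_instance
instance (dl dr : V → ℕ) : DecidableEq (Site V dl dr) := by unfold Site; infer_instance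

/-- the local term `P_{j,j+1}` of the block-diagonal Hamiltonian on the periodic chain
of `N` qudits: it preserves the decomposition of each site, acts as the identity on all
sites other than `j, j+1` and on the factors `H_{α_l}` of site `j` and `H_{β_r}` of site
`j+1`, and acts as `Q α β` on `H_{α_r} ⊗ H_{β_l}` (for the blocks `α` at `j`, `β` at
`j+1`). -/
noncomputable def Pblock (V : Type*) [Fintype V] [DecidableEq V] (dl dr : V → ℕ)
    (Q : ∀ α β : V, Matrix (Fin (dr α) × Fin (dl β)) (Fin (dr α) × Fin (dl β)) ℂ)
    (N : ℕ) [NeZero N] (j : ZMod N) :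
    Matrix (ZMod N → Site V dl dr) (ZMod N → Site V dl dr) ℂ :=
  Matrix.of fun x y =>
    (if ∀ i, i ≠ j → i ≠ j + 1 → x i = y i then (1 : ℂ) else 0) *
    (if h : (x j).1 = (y j).1 ∧ (x (j + 1)).1 = (y (j + 1)).1 then
      (if (x j).2.1 = castL dl h.1 (y j).2.1 ∧
          (x (j + 1)).2.2 = castR dr h.2 (y (j + 1)).2.2 then
        Q (x j).1 (x (j + 1)).1 ((x j).2.2, (x (j + 1)).2.1)
          (castR dr h.1 (y j).2.2, castL dl h.2 (y (j + 1)).2.1)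
      else 0)
    else 0)

/-- the block-diagonal Hamiltonian `H_N = Σ_{j ∈ ℤ/N} P_{j,j+1}`. -/
noncomputable def Hblock (V : Type*) [Fintype V] [DecidableEq V] (dl dr : V → ℕ)
    (Q : ∀ α β : V, Matrix (Fin (dr α) × Fin (dl β)) (Fin (dr α) × Fin (dl β)) ℂ)
    (N : ℕ) [NeZero N] :
    Matrix (ZMod N → Site V dl dr) (ZMod N → Site V dl dr) ℂ :=
  ∑ j, Pblock V dl dr Q N j

/-- the elementary product vector `⊗_j f_j` lying in the summand of `((ℂ^d)^{⊗N}`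
labelled by the block configuration `a : ℤ/N → V`, where
`f j ∈ H_{(a j)_r} ⊗ H_{(a (j+1))_l}`. -/
noncomputable def prodVec (V : Type*) [DecidableEq V] (dl dr : V → ℕ) (N : ℕ) [NeZero N]
    (a : ZMod N → V)
    (f : ∀ j : ZMod N, Fin (dr (a j)) × Fin (dl (a (j + 1))) → ℂ) :
    (ZMod N → Site V dl dr) → ℂ :=
  fun x =>
    if h : ∀ j, (x j).1 = a j then
      ∏ j, f j (castR dr (h j).symm (x j).2.2, castL dl (h (j + 1)).symm (x (j + 1)).2.1)
    else 0

/-! Regrouping the two factors of every site into bonds `H_{(a j)_r} ⊗ H_{(a (j+1))_l}`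
identifies `(ℂ^d)^{⊗N}` with the direct sum, over block configurations `a : ℤ/N → V`, of
the tensor products of the bond spaces, and `H_N` with the direct sum over `a` of
`Σ_j Q_{a j, a (j+1)}`, where the `j`-th term acts on bond `j` only. The kernel of a sum of
orthogonal projections is the intersection of their kernels; for projections acting on
different tensor factors this intersection is the range of the projection `⊗_j (1 - Q_j)`,
whose dimension is its trace `∏_j dim ker Q_j`. Configurations that are not closed walks of
`G` contribute a vanishing factor. -/

namespace Matrix

section PiKronecker

variable {R ι : Type*} [Fintype ι] {κ : ι → Type*}

def piKronecker [CommMonoid R] (M : ∀ i, Matrix (κ i) (κ i) R) :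
    Matrix (∀ i, κ i) (∀ i, κ i) R :=
  of fun g g' => ∏ i, M i (g i) (g' i)

theorem piKronecker_apply [CommMonoid R] (M : ∀ i, Matrix (κ i) (κ i) R) (g g' : ∀ i, κ i) :
    piKronecker M g g' = ∏ i, M i (g i) (g' i) := rfl

theorem piKronecker_conjTranspose [CommMonoid R] [StarMul R] (M : ∀ i, Matrix (κ i) (κ i) R) :
    (piKronecker M)ᴴ = piKronecker fun i => (M i)ᴴ := by
  ext g g'
  simp [piKronecker_apply, star_prod]

variable [CommSemiring R]

theorem piKronecker_eq_zero {M : ∀ i, Matrix (κ i) (κ i) R} {j : ι} (h : M j = 0) :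
    piKronecker M = 0 := by
  ext g g'
  exact Finset.prod_eq_zero (Finset.mem_univ j) (by simp [h])

theorem piKronecker_mul [DecidableEq ι] [∀ i, Fintype (κ i)]
    (M M' : ∀ i, Matrix (κ i) (κ i) R) :
    piKronecker M * piKronecker M' = piKronecker (M * M') := by
  ext g g'
  simp only [mul_apply, piKronecker_apply, Pi.mul_apply, ← Finset.prod_mul_distrib]
  exact (Fintype.prod_sum fun i k => M i (g i) k * M' i k (g' i)).symm

theorem trace_piKronecker [DecidableEq ι] [∀ i, Fintype (κ i)]
    (M : ∀ i, Matrix (κ i) (κ i) R) :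
    (piKronecker M).trace = ∏ i, (M i).trace := by
  simp only [trace, diag, piKronecker_apply]
  exact (Fintype.prod_sum fun i k => M i k k).symm

@[simp]
theorem piKronecker_one [∀ i, DecidableEq (κ i)] :
    piKronecker (1 : ∀ i, Matrix (κ i) (κ i) R) = 1 := by
  ext g g'
  simp only [piKronecker_apply, Pi.one_apply, one_apply, Fintype.prod_boole, funext_iff]

variable [DecidableEq ι] [∀ i, DecidableEq (κ i)]

def onFactor (j : ι) (A : Matrix (κ j) (κ j) R) : Matrix (∀ i, κ i) (∀ i, κ i) R :=
  piKronecker (Function.update 1 j A)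

theorem onFactor_apply (j : ι) (A : Matrix (κ j) (κ j) R) (g g' : ∀ i, κ i) :
    onFactor j A g g' = (if ∀ i, i ≠ j → g i = g' i then 1 else 0) * A (g j) (g' j) := by
  rw [onFactor, piKronecker_apply, ← Finset.prod_erase_mul _ _ (Finset.mem_univ j),
    Function.update_self]
  congr 1
  rw [Finset.prod_congr rfl fun i hi => by
    rw [Function.update_of_ne (Finset.ne_of_mem_erase hi), Pi.one_apply, one_apply],
    Finset.prod_boole]
  simp

@[simp]
theorem onFactor_one (j : ι) : onFactor j (1 : Matrix (κ j) (κ j) R) = 1 := by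
  rw [onFactor, show Function.update (1 : ∀ i, Matrix (κ i) (κ i) R) j 1 = 1 from
    Function.update_eq_self j (1 : ∀ i, Matrix (κ i) (κ i) R), piKronecker_one]

theorem onFactor_sub {R : Type*} [CommRing R] (j : ι) (A B : Matrix (κ j) (κ j) R) :
    onFactor j (A - B) = onFactor j A - onFactor j B := by
  ext g g'
  simp [onFactor_apply, mul_sub]

theorem onFactor_conjTranspose [StarRing R] (j : ι) (A : Matrix (κ j) (κ j) R) :
    (onFactor j A)ᴴ = onFactor j Aᴴ := by
  rw [onFactor, piKronecker_conjTranspose, onFactor]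
  congr 1
  funext i
  rcases eq_or_ne i j with rfl | hij
  · simp
  · simp [Function.update_of_ne hij]

theorem IsHermitian.onFactor [StarRing R] {j : ι} {A : Matrix (κ j) (κ j) R}
    (hA : A.IsHermitian) : (onFactor j A).IsHermitian := by
  rw [IsHermitian, onFactor_conjTranspose, hA.eq]

variable [∀ i, Fintype (κ i)]

theorem onFactor_mul_piKronecker (j : ι) (A : Matrix (κ j) (κ j) R)
    (M : ∀ i, Matrix (κ i) (κ i) R) :
    onFactor j A * piKronecker M = piKronecker (Function.update M j (A * M j)) := by
  rw [onFactor, piKronecker_mul]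
  congr 1
  funext i
  rcases eq_or_ne i j with rfl | hij
  · simp
  · simp [Function.update_of_ne hij]

theorem onFactor_mul_onFactor (j : ι) (A B : Matrix (κ j) (κ j) R) :
    onFactor j A * onFactor j B = onFactor j (A * B) := by
  nth_rewrite 2 [onFactor]
  rw [onFactor_mul_piKronecker, Function.update_idem, Function.update_self, onFactor]

theorem isIdempotentElem_onFactor {j : ι} {A : Matrix (κ j) (κ j) R}
    (hA : IsIdempotentElem A) : IsIdempotentElem (onFactor j A) :=
  (onFactor_mul_onFactor j A A).trans (congrArg _ hA.eq)

theorem piKronecker_update_eq_mul_onFactor {M : ∀ i, Matrix (κ i) (κ i) R} {j : ι}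
    (hj : M j = 1) (A : Matrix (κ j) (κ j) R) :
    piKronecker (Function.update M j A) = piKronecker M * onFactor j A := by
  rw [onFactor, piKronecker_mul]
  congr 1
  funext i
  rcases eq_or_ne i j with rfl | hij
  · simp [hj]
  · simp [Function.update_of_ne hij]

theorem piKronecker_mulVec_eq_self {M : ∀ i, Matrix (κ i) (κ i) R} {x : (∀ i, κ i) → R}
    (hx : ∀ i, onFactor i (M i) *ᵥ x = x) : piKronecker M *ᵥ x = x := by
  suffices ∀ S : Finset ι, piKronecker (S.piecewise M 1) *ᵥ x = x by
    simpa using this Finset.univ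
  intro S
  induction S using Finset.induction_on with
  | empty => simp
  | insert j S hj ih =>
    rw [Finset.piecewise_insert, piKronecker_update_eq_mul_onFactor
      (Finset.piecewise_eq_of_notMem _ _ _ hj), ← mulVec_mulVec, hx, ih]

end PiKronecker

section Projection

variable {n : Type*} [Fintype n]

open scoped ComplexOrder

variable {𝕜 : Type*} [RCLike 𝕜]

theorem IsHermitian.posSemidef_of_isIdempotentElem {A : Matrix n n 𝕜} (hA : A.IsHermitian)
    (hA' : IsIdempotentElem A) : A.PosSemidef := by
  have hAA : A = Aᴴ * A := by rw [hA.eq, hA'.eq]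
  exact hAA ▸ posSemidef_conjTranspose_mul_self A

theorem ker_sum_mulVecLin_of_posSemidef {ι : Type*} [Fintype ι] {A : ι → Matrix n n 𝕜}
    (hA : ∀ i, (A i).PosSemidef) :
    LinearMap.ker (∑ i, A i).mulVecLin = ⨅ i, LinearMap.ker (A i).mulVecLin := by
  refine le_antisymm (fun x hx => ?_) (fun x hx => ?_)
  · rw [LinearMap.mem_ker, mulVecLin_apply] at hx
    have hsum : ∑ i, star x ⬝ᵥ (A i *ᵥ x) = 0 := by
      simp only [← dotProduct_sum, ← sum_mulVec, hx, dotProduct_zero]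
    rw [Finset.sum_eq_zero_iff_of_nonneg fun i _ => (hA i).dotProduct_mulVec_nonneg x] at hsum
    simp only [Submodule.mem_iInf, LinearMap.mem_ker, mulVecLin_apply]
    exact fun i => ((hA i).dotProduct_mulVec_zero_iff x).mp (hsum i (Finset.mem_univ i))
  · simp only [Submodule.mem_iInf, LinearMap.mem_ker, mulVecLin_apply] at hx ⊢
    simp [sum_mulVec, hx]

variable [DecidableEq n] {K : Type*} [Field K]

theorem trace_eq_finrank_of_isProj {p : Submodule K (n → K)} {M : Matrix n n K}
    (h : LinearMap.IsProj p M.mulVecLin) : M.trace = Module.finrank K p := by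
  rw [← trace_toLin'_eq]
  exact h.trace

theorem isProj_ker_one_sub {R : Type*} [CommRing R] {M : Matrix n n R}
    (hM : IsIdempotentElem M) :
    LinearMap.IsProj (LinearMap.ker M.mulVecLin) (1 - M).mulVecLin where
  map_mem x := by
    simp [mulVec_sub, mulVec_mulVec, hM.eq]
  map_id x hx := by
    rw [LinearMap.mem_ker, mulVecLin_apply] at hx
    simp [hx]

theorem finrank_ker_eq_trace_one_sub {M : Matrix n n K} (hM : IsIdempotentElem M) :
    (Module.finrank K (LinearMap.ker M.mulVecLin) : K) = (1 - M).trace :=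
  (trace_eq_finrank_of_isProj (isProj_ker_one_sub hM)).symm

end Projection

section OnFactorKernel

variable {ι : Type*} [Fintype ι] [DecidableEq ι] {κ : ι → Type*}
  [∀ i, Fintype (κ i)] [∀ i, DecidableEq (κ i)]

theorem isProj_iInf_ker_onFactor {R : Type*} [CommRing R] {Q : ∀ i, Matrix (κ i) (κ i) R}
    (hQ : ∀ i, IsIdempotentElem (Q i)) :
    LinearMap.IsProj (⨅ i, LinearMap.ker (onFactor i (Q i)).mulVecLin)
      (piKronecker (1 - Q)).mulVecLin where
  map_mem x := by
    simp only [Submodule.mem_iInf, LinearMap.mem_ker, mulVecLin_apply, mulVec_mulVec,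
      onFactor_mul_piKronecker]
    intro i
    rw [piKronecker_eq_zero (j := i) (by simp [mul_sub, (hQ i).eq]), zero_mulVec]
  map_id x hx := by
    simp only [Submodule.mem_iInf, LinearMap.mem_ker, mulVecLin_apply] at hx ⊢
    exact piKronecker_mulVec_eq_self fun i => by simp [onFactor_sub, sub_mulVec, hx i]

theorem finrank_iInf_ker_onFactor {K : Type*} [Field K] [CharZero K]
    {Q : ∀ i, Matrix (κ i) (κ i) K} (hQ : ∀ i, IsIdempotentElem (Q i)) :
    Module.finrank K ↥(⨅ i, LinearMap.ker (onFactor i (Q i)).mulVecLin)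
      = ∏ i, Module.finrank K (LinearMap.ker (Q i).mulVecLin) := by
  have htrace := trace_eq_finrank_of_isProj (isProj_iInf_ker_onFactor hQ)
  rw [trace_piKronecker] at htrace
  exact_mod_cast htrace.symm.trans
    (Finset.prod_congr rfl fun i _ => (finrank_ker_eq_trace_one_sub (hQ i)).symm)

theorem finrank_ker_sum_onFactor {𝕜 : Type*} [RCLike 𝕜] {Q : ∀ i, Matrix (κ i) (κ i) 𝕜}
    (hQ : ∀ i, (Q i).IsHermitian) (hQ' : ∀ i, IsIdempotentElem (Q i)) :
    Module.finrank 𝕜 (LinearMap.ker (∑ i, onFactor i (Q i)).mulVecLin)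
      = ∏ i, Module.finrank 𝕜 (LinearMap.ker (Q i).mulVecLin) := by
  rw [ker_sum_mulVecLin_of_posSemidef fun i =>
      (hQ i).onFactor.posSemidef_of_isIdempotentElem (isIdempotentElem_onFactor (hQ' i)),
    finrank_iInf_ker_onFactor hQ']

end OnFactorKernel

section BlockDiagonal

variable {R : Type*} [CommSemiring R] {A : Type*} [Fintype A] [DecidableEq A] {G : A → Type*}
  [∀ a, Fintype (G a)]

theorem blockDiagonal'_mulVec_apply (B : ∀ a, Matrix (G a) (G a) R) (v : (Σ a, G a) → R)
    (a : A) (i : G a) :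
    (blockDiagonal' B *ᵥ v) ⟨a, i⟩ = (B a *ᵥ fun k => v ⟨a, k⟩) i := by
  rw [mulVec, dotProduct, ← Finset.univ_sigma_univ, Finset.sum_sigma,
    Finset.sum_eq_single a (fun b _ hb => ?_) (by simp)]
  · simp [mulVec, dotProduct, blockDiagonal'_apply_eq]
  · exact Finset.sum_eq_zero fun k _ => by
      rw [blockDiagonal'_apply_ne _ _ _ hb.symm, zero_mul]

def kerBlockDiagonal'Equiv (B : ∀ a, Matrix (G a) (G a) R) :
    LinearMap.ker (blockDiagonal' B).mulVecLin ≃ₗ[R] ∀ a, LinearMap.ker (B a).mulVecLin where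
  toFun v a := ⟨fun k => v.1 ⟨a, k⟩, LinearMap.mem_ker.mpr <| funext fun i => by
    rw [mulVecLin_apply, ← blockDiagonal'_mulVec_apply]
    exact congrFun (LinearMap.mem_ker.mp v.2) ⟨a, i⟩⟩
  map_add' _ _ := rfl
  map_smul' _ _ := rfl
  invFun w := ⟨fun p => (w p.1).1 p.2, LinearMap.mem_ker.mpr <| funext fun ⟨a, i⟩ => by
    rw [mulVecLin_apply, blockDiagonal'_mulVec_apply]
    exact congrFun (LinearMap.mem_ker.mp (w a).2) i⟩
  left_inv _ := rfl
  right_inv _ := rfl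

theorem finrank_ker_blockDiagonal' {K : Type*} [Field K] (B : ∀ a, Matrix (G a) (G a) K) :
    Module.finrank K (LinearMap.ker (blockDiagonal' B).mulVecLin)
      = ∑ a, Module.finrank K (LinearMap.ker (B a).mulVecLin) := by
  rw [(kerBlockDiagonal'Equiv B).finrank_eq, Module.finrank_pi_fintype]

end BlockDiagonal

theorem finrank_ker_reindex {K m l : Type*} [Field K] [Fintype m] [Fintype l] (e : m ≃ l)
    (M : Matrix m m K) :
    Module.finrank K (LinearMap.ker (reindex e e M).mulVecLin)
      = Module.finrank K (LinearMap.ker M.mulVecLin) := by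
  rw [mulVecLin_reindex, LinearEquiv.ker_comp, LinearMap.ker_comp,
    Submodule.comap_equiv_eq_map_symm]
  exact LinearEquiv.finrank_map_eq _ _

end Matrix

/-- Site `i` carries the pair `(w i, u (i - 1))` and bond `i` the pair `(w i, u i)`: two
configurations agree on all bonds but `j` iff they agree on all sites but `j, j + 1` and on the
halves of these two sites that bond `j` does not touch. -/
theorem forall_sites_ne_iff_forall_bonds_ne {G : Type*} [AddGroupWithOne G] (h10 : (1 : G) ≠ 0)
    {α β : G → Type*} (u u' : ∀ i, α i) (w w' : ∀ i, β i) (j : G) :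
    ((∀ i, i ≠ j → i ≠ j + 1 → w i = w' i ∧ u (i - 1) = u' (i - 1)) ∧
        u (j - 1) = u' (j - 1) ∧ w (j + 1) = w' (j + 1)) ↔
      ∀ i, i ≠ j → w i = w' i ∧ u i = u' i := by
  constructor
  · rintro ⟨hsite, hu, hw⟩ i hij
    refine ⟨?_, ?_⟩
    · obtain rfl | hij' := eq_or_ne i (j + 1)
      · exact hw
      · exact (hsite i hij hij').1
    · obtain rfl | hij' := eq_or_ne i (j - 1)
      · exact hu
      · have := (hsite (i + 1) (fun h => hij' (eq_sub_of_add_eq h))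
          (fun h => hij (add_right_cancel h))).2
        rwa [add_sub_cancel_right] at this
  · intro hbond
    refine ⟨fun i hij hij' =>
        ⟨(hbond i hij).1, (hbond _ fun h => hij' (eq_add_of_sub_eq h)).2⟩,
      (hbond _ fun h => h10 ?_).2, (hbond _ fun h => h10 ?_).1⟩
    · rwa [sub_eq_self] at h
    · rwa [add_eq_left] at h

section Chain

variable {V : Type*} (dl dr : V → ℕ) {N : ℕ}

theorem castL_inj {α β : V} (h : α = β) {u v : Fin (dl β)} :
    castL dl h u = castL dl h v ↔ u = v :=
  cast_inj _

@[simp]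
theorem val_castL {α β : V} (h : α = β) (u : Fin (dl β)) : (castL dl h u : ℕ) = u := by
  subst h
  rfl

@[simp]
theorem val_castR {α β : V} (h : α = β) (u : Fin (dr β)) : (castR dr h u : ℕ) = u := by
  subst h
  rfl

abbrev Bond (N : ℕ) (a : ZMod N → V) (j : ZMod N) : Type :=
  Fin (dr (a j)) × Fin (dl (a (j + 1)))

theorem castL_snd_of_eq {a : ZMod N → V} (g : ∀ j, Bond dl dr N a j) {i i' : ZMod N}
    (hi : i' = i) (h : a (i + 1) = a (i' + 1)) : castL dl h (g i').2 = (g i).2 := by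
  subst hi
  rfl

theorem castL_site_of_eq (x : ZMod N → Site V dl dr) {i i' : ZMod N} (hi : i' = i)
    (h : (x i).1 = (x i').1) : castL dl h (x i').2.1 = (x i).2.1 := by
  subst hi
  rfl

/-- Site `j` contributes its right factor to bond `j` and its left factor to bond `j - 1`. -/
def toBonds (x : ZMod N → Site V dl dr) : Σ a : ZMod N → V, ∀ j, Bond dl dr N a j :=
  ⟨fun j => (x j).1, fun j => ((x j).2.2, (x (j + 1)).2.1)⟩

def ofBonds (p : Σ a : ZMod N → V, ∀ j, Bond dl dr N a j) : ZMod N → Site V dl dr :=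
  fun j => ⟨p.1 j, castL dl (congrArg p.1 (sub_add_cancel j 1).symm) (p.2 (j - 1)).2, (p.2 j).1⟩

theorem val_ofBonds_left (p : Σ a : ZMod N → V, ∀ j, Bond dl dr N a j) (j : ZMod N) :
    ((ofBonds dl dr p j).2.1 : ℕ) = (p.2 (j - 1)).2 :=
  val_castL dl (congrArg p.1 (sub_add_cancel j 1).symm) _

theorem val_ofBonds_right (p : Σ a : ZMod N → V, ∀ j, Bond dl dr N a j) (j : ZMod N) :
    ((ofBonds dl dr p j).2.2 : ℕ) = (p.2 j).1 :=
  rfl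

def bondEquiv : (ZMod N → Site V dl dr) ≃ Σ a : ZMod N → V, ∀ j, Bond dl dr N a j where
  toFun := toBonds dl dr
  invFun := ofBonds dl dr
  left_inv x := by
    funext j
    refine Sigma.ext rfl (heq_of_eq (Prod.ext ?_ rfl))
    exact castL_site_of_eq dl dr x (sub_add_cancel j 1)
      (congrArg (fun i => (x i).1) (sub_add_cancel j 1).symm)
  right_inv := fun ⟨a, g⟩ => Sigma.ext rfl <| heq_of_eq <| funext fun j =>
    Prod.ext rfl (castL_snd_of_eq dl dr g (add_sub_cancel_right j 1)
      (congrArg (fun i => a (i + 1)) (add_sub_cancel_right j 1).symm))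

theorem ofBonds_apply_eq_iff {a : ZMod N → V} (g g' : ∀ j, Bond dl dr N a j) (i : ZMod N) :
    ofBonds dl dr ⟨a, g⟩ i = ofBonds dl dr ⟨a, g'⟩ i ↔
      (g i).1 = (g' i).1 ∧ (g (i - 1)).2 = (g' (i - 1)).2 := by
  simp only [ofBonds, Site, Sigma.mk.injEq, heq_eq_eq, true_and, Prod.mk.injEq, castL_inj,
    and_comm]

end Chain

section Hamiltonian

variable (dl dr : V → ℕ)
  (Q : ∀ α β : V, Matrix (Fin (dr α) × Fin (dl β)) (Fin (dr α) × Fin (dl β)) ℂ)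
  {N : ℕ} [NeZero N]

theorem Pblock_ofBonds_of_ne {a b : ZMod N → V} (hab : a ≠ b) (g : ∀ j, Bond dl dr N a j)
    (g' : ∀ j, Bond dl dr N b j) (j : ZMod N) :
    Pblock V dl dr Q N j (ofBonds dl dr ⟨a, g⟩) (ofBonds dl dr ⟨b, g'⟩) = 0 := by
  rw [Pblock, of_apply]
  split_ifs with hsite hblock
  · refine absurd (funext fun i => ?_) hab
    obtain rfl | hij := eq_or_ne i j
    · exact hblock.1
    obtain rfl | hij' := eq_or_ne i (j + 1)
    · exact hblock.2
    exact congrArg Sigma.fst (hsite i hij hij')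
  all_goals simp

theorem Pblock_ofBonds_self (h10 : (1 : ZMod N) ≠ 0) {a : ZMod N → V}
    (g g' : ∀ j, Bond dl dr N a j) (j : ZMod N) :
    Pblock V dl dr Q N j (ofBonds dl dr ⟨a, g⟩) (ofBonds dl dr ⟨a, g'⟩)
      = onFactor j (Q (a j) (a (j + 1))) g g' := by
  rw [Pblock, of_apply, dif_pos ⟨rfl, rfl⟩, onFactor_apply, ite_zero_mul_ite_zero, ite_zero_mul,
    one_mul, one_mul]
  -- Comparing `Fin.val`s gets rid of the transports `castL`, `castR` along equal blocks.
  refine if_congr ?_ ?_ rfl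
  · simp only [ofBonds_apply_eq_iff, Prod.ext_iff, Fin.ext_iff]
    simp only [val_castL, val_castR, val_ofBonds_left, val_ofBonds_right]
    exact forall_sites_ne_iff_forall_bonds_ne h10 (fun i => ((g i).2 : ℕ))
      (fun i => ((g' i).2 : ℕ)) (fun i => ((g i).1 : ℕ)) (fun i => ((g' i).1 : ℕ)) j
  · show Q (a j) (a (j + 1)) _ _ = _
    congr 1 <;> ext <;>
      simp only [val_castL, val_castR, val_ofBonds_left, val_ofBonds_right] <;>
      rw [add_sub_cancel_right]

theorem reindex_Pblock (h10 : (1 : ZMod N) ≠ 0) (j : ZMod N) :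
    reindex (bondEquiv dl dr) (bondEquiv dl dr) (Pblock V dl dr Q N j)
      = blockDiagonal' fun a => onFactor j (Q (a j) (a (j + 1))) := by
  ext ⟨a, g⟩ ⟨b, g'⟩
  rw [reindex_apply, submatrix_apply]
  obtain rfl | hab := eq_or_ne a b
  · rw [blockDiagonal'_apply_eq]
    exact Pblock_ofBonds_self dl dr Q h10 g g' j
  · rw [blockDiagonal'_apply_ne _ _ _ hab]
    exact Pblock_ofBonds_of_ne dl dr Q hab g g' j

theorem reindex_Hblock (h10 : (1 : ZMod N) ≠ 0) :
    reindex (bondEquiv dl dr) (bondEquiv dl dr) (Hblock V dl dr Q N)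
      = blockDiagonal' fun a => ∑ j, onFactor j (Q (a j) (a (j + 1))) := by
  rw [Hblock, ← coe_reindexLinearEquiv ℂ ℂ, map_sum]
  simp only [coe_reindexLinearEquiv, reindex_Pblock dl dr Q h10]
  rw [← Finset.sum_fn]
  exact (map_sum (blockDiagonal'AddMonoidHom (fun a => ∀ j, Bond dl dr N a j)
    (fun a => ∀ j, Bond dl dr N a j) ℂ) (fun j a => onFactor j (Q (a j) (a (j + 1))))
    Finset.univ).symm

end Hamiltonian

open scoped Classical in
/-- the ground state degeneracy of the block-diagonal Hamiltonian is
`dim ker H_N = Σ_{(α^1,…,α^N) ∈ C_N} Π_j dim ker Q_{α_r^j, α_l^{j+1}}`, the sum running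
over the ordered closed walks of length `N` of the directed graph `G` on `V` with an
edge `α → β` whenever `ker Q_{α_r, β_l} ≠ 0`. -/
theorem stmt_14 (V : Type*) [Fintype V] [DecidableEq V] (dl dr : V → ℕ)
    (Q : ∀ α β : V, Matrix (Fin (dr α) × Fin (dl β)) (Fin (dr α) × Fin (dl β)) ℂ)
    (hQherm : ∀ α β, (Q α β).IsHermitian)
    (hQidem : ∀ α β, Q α β * Q α β = Q α β)
    (N : ℕ) [NeZero N] (hN : 2 ≤ N) :
    Module.finrank ℂ (LinearMap.ker (Hblock V dl dr Q N).mulVecLin)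
      = ∑ a ∈ Finset.univ.filter (fun a : ZMod N → V =>
            ∀ j, LinearMap.ker (Q (a j) (a (j + 1))).mulVecLin ≠ ⊥),
          ∏ j : ZMod N,
            Module.finrank ℂ (LinearMap.ker (Q (a j) (a (j + 1))).mulVecLin) := by
  have h10 : (1 : ZMod N) ≠ 0 := by
    have : Fact (1 < N) := ⟨hN⟩
    exact one_ne_zero
  rw [← finrank_ker_reindex (bondEquiv dl dr), reindex_Hblock dl dr Q h10,
    finrank_ker_blockDiagonal']
  simp only [finrank_ker_sum_onFactor (fun _ => hQherm _ _) (fun _ => hQidem _ _)]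
  refine (Finset.sum_filter_of_ne fun a _ hne j hbot => hne ?_).symm
  exact Finset.prod_eq_zero (Finset.mem_univ j) (by rw [hbot, finrank_bot])
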